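/- arXiv:2102.06549 — 6 statements merged into one kernel-verified Lean document; each statement's English description precedes it below -/
import Mathlib

section
/- Let A, C, σ, Ra be strictly positive real parameters. Then the Glukhovsky–Dolzhansky system has no nonconstant polynomial first integral; that is, every polynomial f ∈ ℝ[x,y,z] satisfying X(f) = 0 is a constant polynomial. -/
/-!
Give `x, y, z` the weights `3, 1, 1`. The derivation splits as `x·rot − E + L` with
`rot = y∂_z − z∂_y`, the weighted Euler operator `E = σx∂_x + y∂_y + z∂_z` preserving weights,
and `L` lowering them. Let `f` be a first integral without constant term and `g` its top weighted
component. The top weight of `X f` is `x·rot g`, so `rot g = 0`. For the Fischer inner product,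
in which multiplication by `Xᵢ` is adjoint to `∂ᵢ`, `rot` is skew-adjoint; pairing `X f = 0`
with `g` therefore kills the `x·rot` and `L` terms and leaves `⟨g, E g⟩ = 0`. Since `σ > 0`,
`E` is positive definite on polynomials without constant term, so `g = 0`.
-/

open MvPolynomial

/-- The derivation associated with the Glukhovsky–Dolzhansky system
`ẋ = A y z + C z − σ x, ẏ = −x z + Ra − y, ż = −z + x y`,
acting on `ℝ[x,y,z]` (variables `X 0 = x`, `X 1 = y`, `X 2 = z`). -/
noncomputable def gdDeriv (A C σ Ra : ℝ) (f : MvPolynomial (Fin 3) ℝ) :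
    MvPolynomial (Fin 3) ℝ :=
  (MvPolynomial.C A * X 1 * X 2 + MvPolynomial.C C * X 2 - MvPolynomial.C σ * X 0) *
      pderiv (0 : Fin 3) f
    + (-(X 0 * X 2) + MvPolynomial.C Ra - X 1) * pderiv (1 : Fin 3) f
    + (-X 2 + X 0 * X 1) * pderiv (2 : Fin 3) f

namespace MvPolynomial

open Finsupp Nat

variable {σ R : Type*} [CommRing R]

section Rotation

theorem pderiv_pderiv_comm (i j : σ) (p : MvPolynomial σ R) :
    pderiv i (pderiv j p) = pderiv j (pderiv i p) := by
  classical
  ext μ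
  simp only [coeff_pderiv, add_assoc, add_comm (single j 1) (single i 1), Finsupp.add_apply]
  rcases eq_or_ne i j with rfl | hij
  · ring
  · simp only [single_eq_of_ne hij, single_eq_of_ne hij.symm, add_zero]
    ring

noncomputable def rot (i j : σ) (p : MvPolynomial σ R) : MvPolynomial σ R :=
  X i * pderiv j p - X j * pderiv i p

theorem rot_sub (i j : σ) (p q : MvPolynomial σ R) :
    rot i j (p - q) = rot i j p - rot i j q := by
  simp only [rot, map_sub]
  ring

theorem pderiv_rot {i j k : σ} (hi : k ≠ i) (hj : k ≠ j) (p : MvPolynomial σ R) :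
    pderiv k (rot i j p) = rot i j (pderiv k p) := by
  simp [rot, pderiv_X_of_ne hi.symm, pderiv_X_of_ne hj.symm, pderiv_pderiv_comm k]

end Rotation

section Fischer

noncomputable def fischer (p q : MvPolynomial σ R) : R :=
  ∑ μ ∈ p.support, (μ.prod fun _ k => (k ! : R)) * coeff μ p * coeff μ q

theorem _root_.Finsupp.prod_factorial_add_single [DecidableEq σ] (μ : σ →₀ ℕ) (i : σ) :
    ((μ + single i 1).prod fun _ k => (k ! : R)) =
      (μ.prod fun _ k => (k ! : R)) * (μ i + 1) := by
  have h := mul_prod_erase' (μ + single i 1) i (fun _ k => (k ! : R)) (by simp)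
  rw [← mul_prod_erase' μ i (fun _ k => (k ! : R)) (by simp), ← h]
  simp only [Finsupp.coe_add, Pi.add_apply, single_eq_same, factorial_succ, cast_mul, cast_add,
    cast_one, erase_add, erase_single, add_zero]
  ring

theorem fischer_eq_sum_of_support_subset {p q : MvPolynomial σ R} {s : Finset (σ →₀ ℕ)}
    (hs : p.support ⊆ s) :
    fischer p q = ∑ μ ∈ s, (μ.prod fun _ k => (k ! : R)) * coeff μ p * coeff μ q :=
  Finset.sum_subset hs fun μ _ hμ => by simp [notMem_support_iff.mp hμ]

theorem fischer_comm (p q : MvPolynomial σ R) : fischer p q = fischer q p := by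
  classical
  rw [fischer_eq_sum_of_support_subset (Finset.subset_union_left (s₂ := q.support)),
    fischer_eq_sum_of_support_subset (Finset.subset_union_right (s₁ := p.support))]
  exact Finset.sum_congr rfl fun _ _ => by ring

@[simp]
theorem fischer_zero_left (q : MvPolynomial σ R) : fischer 0 q = 0 := by
  simp [fischer]

@[simp]
theorem fischer_zero_right (p : MvPolynomial σ R) : fischer p 0 = 0 := by
  simp [fischer]

theorem fischer_sub_right (p q q' : MvPolynomial σ R) :
    fischer p (q - q') = fischer p q - fischer p q' := by
  simp only [fischer, coeff_sub, mul_sub, Finset.sum_sub_distrib]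

theorem fischer_sub_left (p p' q : MvPolynomial σ R) :
    fischer (p - p') q = fischer p q - fischer p' q := by
  rw [fischer_comm, fischer_sub_right, fischer_comm q, fischer_comm q]

theorem fischer_X_mul (i : σ) (p q : MvPolynomial σ R) :
    fischer (X i * p) q = fischer p (pderiv i q) := by
  classical
  simp only [fischer, support_X_mul, Finset.sum_map, addLeftEmbedding_apply, coeff_X_mul]
  refine Finset.sum_congr rfl fun μ _ => ?_
  rw [add_comm, Finsupp.prod_factorial_add_single, coeff_pderiv]
  ring

theorem fischer_X_mul_right (i : σ) (p q : MvPolynomial σ R) :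
    fischer p (X i * q) = fischer (pderiv i p) q := by
  rw [fischer_comm, fischer_X_mul, fischer_comm]

theorem fischer_X_mul_pderiv (i j : σ) (p q : MvPolynomial σ R) :
    fischer p (X i * pderiv j q) = fischer (X j * pderiv i p) q := by
  rw [fischer_comm, fischer_X_mul, fischer_X_mul, fischer_comm]

theorem fischer_rot (i j : σ) (p q : MvPolynomial σ R) :
    fischer p (rot i j q) = -fischer (rot i j p) q := by
  rw [rot, rot, fischer_sub_right, fischer_sub_left, fischer_X_mul_pderiv, fischer_X_mul_pderiv]
  ring

end Fischer

section WeightedDegree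

variable {w : σ → ℤ} {p q : MvPolynomial σ R} {k n : ℤ}

def WeightedDegreeLT (w : σ → ℤ) (p : MvPolynomial σ R) (k : ℤ) : Prop :=
  ∀ μ, k ≤ weight w μ → coeff μ p = 0

namespace WeightedDegreeLT

theorem mono (hp : WeightedDegreeLT w p k) {k' : ℤ} (hk : k ≤ k') : WeightedDegreeLT w p k' :=
  fun μ hμ => hp μ (hk.trans hμ)

theorem add (hp : WeightedDegreeLT w p k) (hq : WeightedDegreeLT w q k) :
    WeightedDegreeLT w (p + q) k :=
  fun μ hμ => by rw [coeff_add, hp μ hμ, hq μ hμ, add_zero]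

theorem sub (hp : WeightedDegreeLT w p k) (hq : WeightedDegreeLT w q k) :
    WeightedDegreeLT w (p - q) k :=
  fun μ hμ => by rw [coeff_sub, hp μ hμ, hq μ hμ, sub_zero]

theorem neg (hp : WeightedDegreeLT w p k) : WeightedDegreeLT w (-p) k :=
  fun μ hμ => by rw [coeff_neg, hp μ hμ, neg_zero]

theorem C_mul (hp : WeightedDegreeLT w p k) (r : R) : WeightedDegreeLT w (C r * p) k :=
  fun μ hμ => by rw [coeff_C_mul, hp μ hμ, mul_zero]

theorem X_mul (hp : WeightedDegreeLT w p k) (i : σ) : WeightedDegreeLT w (X i * p) (k + w i) := by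
  classical
  intro μ hμ
  rw [coeff_X_mul']
  split_ifs with hi
  · refine hp _ ?_
    have := weight_sub_single_add (w := w) (Finsupp.mem_support_iff.mp hi)
    omega
  · rfl

theorem pderiv (hp : WeightedDegreeLT w p k) (i : σ) :
    WeightedDegreeLT w (pderiv i p) (k - w i) := by
  classical
  intro μ hμ
  rw [coeff_pderiv, hp, zero_mul]
  simp only [map_add, weight_single, one_smul]
  omega

theorem rot (hp : WeightedDegreeLT w p k) {i j : σ} (hij : w i = w j) :
    WeightedDegreeLT w (rot i j p) k := by
  have h₁ := (hp.pderiv j).X_mul i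
  have h₂ := (hp.pderiv i).X_mul j
  rw [hij, sub_add_cancel] at h₁
  rw [← hij, sub_add_cancel] at h₂
  exact h₁.sub h₂

end WeightedDegreeLT

theorem IsWeightedHomogeneous.eq_zero_of_weightedDegreeLT (hp : IsWeightedHomogeneous w p n)
    (h : WeightedDegreeLT w p n) : p = 0 := by
  ext μ
  rw [coeff_zero]
  rcases eq_or_ne (weight w μ) n with hμ | hμ
  · exact h μ hμ.ge
  · exact hp.coeff_eq_zero μ hμ

theorem IsWeightedHomogeneous.rot (hp : IsWeightedHomogeneous w p n) {i j : σ}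
    (hij : w i = w j) :
    IsWeightedHomogeneous w (rot i j p) n := by
  have h₁ := (isWeightedHomogeneous_X R w i).mul (hp.pderiv (i := j) (sub_add_cancel n (w j)))
  have h₂ := (isWeightedHomogeneous_X R w j).mul (hp.pderiv (i := i) (sub_add_cancel n (w i)))
  rw [hij, add_sub_cancel] at h₁
  rw [← hij, add_sub_cancel] at h₂
  exact h₁.sub h₂

theorem weightedDegreeLT_sub_weightedHomogeneousComponent (hp : WeightedDegreeLT w p (n + 1)) :
    WeightedDegreeLT w (p - weightedHomogeneousComponent w n p) n := by
  intro μ hμ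
  rw [coeff_sub, coeff_weightedHomogeneousComponent]
  split_ifs with h
  · exact sub_self _
  · rw [hp μ (by omega), sub_zero]

theorem fischer_eq_zero_of_isWeightedHomogeneous (hp : IsWeightedHomogeneous w p n)
    (hq : WeightedDegreeLT w q n) : fischer p q = 0 :=
  Finset.sum_eq_zero fun μ hμ => by rw [hq μ (hp (mem_support_iff.mp hμ)).ge, mul_zero]

end WeightedDegree

theorem coeff_X_mul_pderiv (i : σ) (p : MvPolynomial σ R) (μ : σ →₀ ℕ) :
    coeff μ (X i * pderiv i p) = μ i * coeff μ p := by
  induction p using MvPolynomial.induction_on' with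
  | monomial m r =>
    classical
    rw [X_mul_pderiv_monomial, coeff_smul, coeff_monomial]
    split_ifs with h <;> simp [h]
  | add p q hp hq => simp only [map_add, mul_add, coeff_add, hp, hq]

section Euler

variable [Fintype σ]

noncomputable def weightedEuler (c : σ → R) (p : MvPolynomial σ R) : MvPolynomial σ R :=
  ∑ i, C (c i) * (X i * pderiv i p)

theorem weightedEuler_sub (c : σ → R) (p q : MvPolynomial σ R) :
    weightedEuler c (p - q) = weightedEuler c p - weightedEuler c q := by
  simp only [weightedEuler, map_sub, mul_sub, Finset.sum_sub_distrib]

theorem coeff_weightedEuler (c : σ → R) (p : MvPolynomial σ R) (μ : σ →₀ ℕ) :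
    coeff μ (weightedEuler c p) = (∑ i, c i * μ i) * coeff μ p := by
  simp only [weightedEuler, coeff_sum, coeff_C_mul, coeff_X_mul_pderiv, Finset.sum_mul, mul_assoc]

theorem WeightedDegreeLT.weightedEuler {w : σ → ℤ} {p : MvPolynomial σ R} {k : ℤ}
    (hp : WeightedDegreeLT w p k) (c : σ → R) : WeightedDegreeLT w (weightedEuler c p) k :=
  fun μ hμ => by rw [coeff_weightedEuler, hp μ hμ, mul_zero]

theorem fischer_weightedEuler_self_pos [LinearOrder R] [IsStrictOrderedRing R]
    {c : σ → R} (hc : ∀ i, 0 < c i) {p : MvPolynomial σ R} (hp : p ≠ 0) (hp₀ : coeff 0 p = 0) :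
    0 < fischer p (weightedEuler c p) := by
  refine Finset.sum_pos (fun μ hμ => ?_) (support_nonempty.mpr hp)
  have hμ₀ : μ ≠ 0 := by rintro rfl; exact mem_support_iff.mp hμ hp₀
  obtain ⟨i, hi⟩ := Finsupp.ne_iff.mp hμ₀
  have hprod : 0 < μ.prod fun _ k => (k ! : R) :=
    Finset.prod_pos fun k _ => Nat.cast_pos.mpr (factorial_pos _)
  have hweight : 0 < ∑ i, c i * μ i :=
    Finset.sum_pos' (fun j _ => mul_nonneg (hc j).le (Nat.cast_nonneg _))
      ⟨i, Finset.mem_univ _, mul_pos (hc i) (Nat.cast_pos.mpr (pos_iff_ne_zero.mpr hi))⟩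
  have hsq : 0 < coeff μ p * coeff μ p := mul_self_pos.mpr (mem_support_iff.mp hμ)
  rw [coeff_weightedEuler]
  linarith [mul_pos hprod (mul_pos hweight hsq)]

end Euler

end MvPolynomial

section GlukhovskyDolzhansky

def gdWeight : Fin 3 → ℤ := ![3, 1, 1]

theorem gdDeriv_eq_rot_sub_weightedEuler_add (A C σ Ra : ℝ) (f : MvPolynomial (Fin 3) ℝ) :
    gdDeriv A C σ Ra f = X 0 * rot 1 2 f - weightedEuler ![σ, 1, 1] f +
      (MvPolynomial.C A * (X 1 * (X 2 * pderiv 0 f)) + MvPolynomial.C C * (X 2 * pderiv 0 f) +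
        MvPolynomial.C Ra * pderiv 1 f) := by
  simp only [gdDeriv, rot, weightedEuler, Fin.sum_univ_three, Matrix.cons_val_zero,
    Matrix.cons_val_one, Matrix.cons_val_two, Matrix.head_cons, Matrix.tail_cons, map_one, one_mul]
  ring

theorem weightedDegreeLT_gdDeriv_sub (A C σ Ra : ℝ) {f : MvPolynomial (Fin 3) ℝ} {n : ℤ}
    (hf : WeightedDegreeLT gdWeight f (n + 1)) :
    WeightedDegreeLT gdWeight
      (gdDeriv A C σ Ra f - (X 0 * rot 1 2 f - weightedEuler ![σ, 1, 1] f)) n := by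
  rw [gdDeriv_eq_rot_sub_weightedEuler_add, add_sub_cancel_left]
  have h₀ := (hf.pderiv 0).X_mul 2
  refine (((h₀.X_mul 1).C_mul A).mono ?_ |>.add ((h₀.C_mul C).mono ?_)).add
    (((hf.pderiv 1).C_mul Ra).mono ?_) <;>
    simp only [gdWeight, Matrix.cons_val_zero, Matrix.cons_val_one, Matrix.cons_val] <;> omega

theorem gdDeriv_sub_C (A C σ Ra c : ℝ) (f : MvPolynomial (Fin 3) ℝ) :
    gdDeriv A C σ Ra (f - MvPolynomial.C c) = gdDeriv A C σ Ra f := by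
  simp [gdDeriv]

variable {A C σ Ra : ℝ} {f : MvPolynomial (Fin 3) ℝ} {n : ℤ}

theorem rot_weightedHomogeneousComponent_eq_zero (hf : gdDeriv A C σ Ra f = 0)
    (hlt : WeightedDegreeLT gdWeight f (n + 1)) :
    rot 1 2 (weightedHomogeneousComponent gdWeight n f) = 0 := by
  set g := weightedHomogeneousComponent gdWeight n f
  have hhom : IsWeightedHomogeneous gdWeight (X 0 * rot 1 2 g) (n + 3) := by
    rw [add_comm]
    exact (isWeightedHomogeneous_X ℝ gdWeight 0).mul
      ((weightedHomogeneousComponent_isWeightedHomogeneous n f).rot rfl)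
  have hlead : WeightedDegreeLT gdWeight (X 0 * rot 1 2 f - weightedEuler ![σ, 1, 1] f) n := by
    simpa [hf] using (weightedDegreeLT_gdDeriv_sub A C σ Ra hlt).neg
  have hdiff : WeightedDegreeLT gdWeight (X 0 * rot 1 2 (f - g)) (n + 3) :=
    ((weightedDegreeLT_sub_weightedHomogeneousComponent hlt).rot (i := 1) (j := 2) rfl).X_mul 0
  have hlt' : WeightedDegreeLT gdWeight (X 0 * rot 1 2 g) (n + 3) := by
    have e : X 0 * rot 1 2 g = X 0 * rot 1 2 f - weightedEuler ![σ, 1, 1] f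
        - X 0 * rot 1 2 (f - g) + weightedEuler ![σ, 1, 1] f := by
      rw [rot_sub]; ring
    rw [e]
    exact ((hlead.mono (by omega)).sub hdiff).add ((hlt.weightedEuler _).mono (by omega))
  simpa [X_ne_zero] using hhom.eq_zero_of_weightedDegreeLT hlt'

theorem fischer_weightedEuler_weightedHomogeneousComponent_eq_zero (hf : gdDeriv A C σ Ra f = 0)
    (hlt : WeightedDegreeLT gdWeight f (n + 1)) :
    fischer (weightedHomogeneousComponent gdWeight n f)
      (weightedEuler ![σ, 1, 1] (weightedHomogeneousComponent gdWeight n f)) = 0 := by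
  set g := weightedHomogeneousComponent gdWeight n f
  have hg : IsWeightedHomogeneous gdWeight g n :=
    weightedHomogeneousComponent_isWeightedHomogeneous n f
  have hrot : fischer g (X 0 * rot 1 2 f) = 0 := by
    rw [fischer_X_mul_right, fischer_rot, ← pderiv_rot (by decide) (by decide),
      rot_weightedHomogeneousComponent_eq_zero hf hlt, map_zero, fischer_zero_left, neg_zero]
  have heuler :
      fischer g (weightedEuler ![σ, 1, 1] f) = fischer g (weightedEuler ![σ, 1, 1] g) := by
    rw [← sub_eq_zero, ← fischer_sub_right, ← weightedEuler_sub]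
    exact fischer_eq_zero_of_isWeightedHomogeneous hg
      ((weightedDegreeLT_sub_weightedHomogeneousComponent hlt).weightedEuler _)
  have hlower :=
    fischer_eq_zero_of_isWeightedHomogeneous hg (weightedDegreeLT_gdDeriv_sub A C σ Ra hlt)
  rw [hf, fischer_sub_right, fischer_sub_right, hrot, heuler, fischer_zero_right] at hlower
  linear_combination hlower

theorem eq_zero_of_gdDeriv_eq_zero (hσ : 0 < σ) (hf : gdDeriv A C σ Ra f = 0)
    (hf₀ : coeff 0 f = 0) : f = 0 := by
  by_contra hne
  obtain ⟨μ, hμ, hmax⟩ :=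
    f.support.exists_max_image (Finsupp.weight gdWeight) (support_nonempty.mpr hne)
  have hlt : WeightedDegreeLT gdWeight f (Finsupp.weight gdWeight μ + 1) := fun ν hν =>
    notMem_support_iff.mp fun hν' => by linarith [hmax ν hν']
  set g := weightedHomogeneousComponent gdWeight (Finsupp.weight gdWeight μ) f
  have hg : g ≠ 0 := fun h => mem_support_iff.mp hμ <| by
    simpa [g, coeff_weightedHomogeneousComponent] using congr_arg (coeff μ) h
  have hg₀ : coeff 0 g = 0 := by simp [g, coeff_weightedHomogeneousComponent, hf₀]
  have hc : ∀ i, 0 < (![σ, 1, 1] : Fin 3 → ℝ) i := by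
    intro i; fin_cases i <;> simp [hσ]
  exact (fischer_weightedEuler_self_pos hc hg hg₀).ne'
    (fischer_weightedEuler_weightedHomogeneousComponent_eq_zero hf hlt)

end GlukhovskyDolzhansky

theorem gd_no_polynomial_first_integral_general
    (A C σ Ra : ℝ) (hσ : 0 < σ)
    (f : MvPolynomial (Fin 3) ℝ) (hf : gdDeriv A C σ Ra f = 0) :
    ∃ c : ℝ, f = MvPolynomial.C c :=
  ⟨coeff 0 f, sub_eq_zero.mp <|
    eq_zero_of_gdDeriv_eq_zero hσ (by rw [gdDeriv_sub_C, hf]) (by simp)⟩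

/-- For positive parameters, every polynomial first integral of the
Glukhovsky–Dolzhansky system is constant. -/
theorem gd_no_polynomial_first_integral
    (A C σ Ra : ℝ) (hA : 0 < A) (hC : 0 < C) (hσ : 0 < σ) (hRa : 0 < Ra)
    (f : MvPolynomial (Fin 3) ℝ) (hf : gdDeriv A C σ Ra f = 0) :
    ∃ c : ℝ, f = MvPolynomial.C c :=
  gd_no_polynomial_first_integral_general A C σ Ra hσ f hf
end

section
/- Let A be a real parameter and consider the Glukhovsky–Dolzhansky system with Ra = C = 0 and σ = 1, namely ẋ = A y z − x, ẏ = −x z − y, ż = −z + x y. If (x, y, z) : I → ℝ³ is a differentiable solution on an interval I and x(t)² − A z(t)² ≠ 0 for all t ∈ I, then the function t ↦ (y(t)² + z(t)²)/(x(t)² − A z(t)²) is constant on I; that is, Φ = (y² + z²)/(x² − A z²) is a rational first integral of the system. -/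
/-!
Along a solution both quadratic forms `y² + z²` and `x² - A z²` satisfy `Q' = -2 Q`: the cubic
terms cancel (`-2xyz + 2xyz` and `2Axyz - 2Axyz`), and only the linear damping survives. Two
functions decaying at the same rate have a quotient with zero derivative, hence constant on an
interval by the mean value inequality.
-/

theorem Convex.eq_of_forall_hasDerivAt_zero {E : Type*} [NormedAddCommGroup E] [NormedSpace ℝ E]
    {f : ℝ → E} {s : Set ℝ} (hs : Convex ℝ s) (hf : ∀ t ∈ s, HasDerivAt f 0 t)
    {a b : ℝ} (ha : a ∈ s) (hb : b ∈ s) : f a = f b := by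
  have h := hs.norm_image_sub_le_of_norm_hasDerivWithin_le
    (fun t ht => (hf t ht).hasDerivWithinAt) (fun _ _ => norm_zero.le) hb ha
  rw [zero_mul, norm_sub_rev] at h
  exact (sub_eq_zero.mp (norm_le_zero_iff.mp h)).symm

theorem HasDerivAt.div_eq_zero_of_same_rate {u v : ℝ → ℝ} {c t : ℝ}
    (hu : HasDerivAt u (c * u t) t) (hv : HasDerivAt v (c * v t) t) (hvt : v t ≠ 0) :
    HasDerivAt (fun s => u s / v s) 0 t := by
  refine (hu.div hv hvt).congr_deriv ?_
  ring

section GlukhovskyDolzhansky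

variable {A t : ℝ} {x y z : ℝ → ℝ}

theorem hasDerivAt_sq_add_sq_of_gd
    (hy : HasDerivAt y (-(x t * z t) - y t) t) (hz : HasDerivAt z (-z t + x t * y t) t) :
    HasDerivAt (fun s => y s ^ 2 + z s ^ 2) (-2 * (y t ^ 2 + z t ^ 2)) t := by
  refine ((hy.fun_pow 2).fun_add (hz.fun_pow 2)).congr_deriv ?_
  ring

theorem hasDerivAt_sq_sub_mul_sq_of_gd
    (hx : HasDerivAt x (A * y t * z t - x t) t) (hz : HasDerivAt z (-z t + x t * y t) t) :
    HasDerivAt (fun s => x s ^ 2 - A * z s ^ 2) (-2 * (x t ^ 2 - A * z t ^ 2)) t := by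
  refine ((hx.fun_pow 2).fun_sub ((hz.fun_pow 2).const_mul A)).congr_deriv ?_
  ring

end GlukhovskyDolzhansky

/-- For the Glukhovsky–Dolzhansky system with `Ra = C = 0`, `σ = 1`,
namely `ẋ = A y z − x, ẏ = −x z − y, ż = −z + x y`, the function
`Φ = (y² + z²)/(x² − A z²)` is a rational first integral: it is constant along every
differentiable solution on an interval on which `x² − A z² ≠ 0`. -/
theorem gd_rational_first_integral_Ra_C_zero_sigma_one
    (A : ℝ) (I : Set ℝ) (hI : Convex ℝ I) (x y z : ℝ → ℝ)
    (hx : ∀ t ∈ I, HasDerivAt x (A * y t * z t - x t) t)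
    (hy : ∀ t ∈ I, HasDerivAt y (-(x t * z t) - y t) t)
    (hz : ∀ t ∈ I, HasDerivAt z (-z t + x t * y t) t)
    (hne : ∀ t ∈ I, x t ^ 2 - A * z t ^ 2 ≠ 0) :
    ∀ s ∈ I, ∀ t ∈ I,
      (y s ^ 2 + z s ^ 2) / (x s ^ 2 - A * z s ^ 2) =
        (y t ^ 2 + z t ^ 2) / (x t ^ 2 - A * z t ^ 2) := by
  intro s hs t ht
  exact hI.eq_of_forall_hasDerivAt_zero (fun r hr =>
    (hasDerivAt_sq_add_sq_of_gd (hy r hr) (hz r hr)).div_eq_zero_of_same_rate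
      (hasDerivAt_sq_sub_mul_sq_of_gd (hx r hr) (hz r hr)) (hne r hr)) hs ht
end

section
/- Let A, C, σ, Ra, α be real numbers with A < 0, α ≠ 0 and C = −2·A·Ra. Suppose (x, y, z) : ℝ → ℝ³ is a differentiable solution of the Glukhovsky–Dolzhansky system ẋ = A y z + C z − σ x, ẏ = −x z + Ra − y, ż = −z + x y. Define X(T) = α·x(αT), Y(T) = α·√(−A)·z(αT), Z(T) = α·√(−A)·(Ra − y(αT)). Then (X, Y, Z) is a solution of the Rabinovich-type system dX/dT = α√(−A)Ra·Y − ασ·X + Y·Z, dY/dT = α√(−A)Ra·X − α·Y − X·Z, dZ/dT = −α·Z + X·Y. Hence, when C = −2·A·Ra, the Glukhovsky–Dolzhansky system is transformed by a linear rescaling of coordinates and time into the Rabinovich system with parameters (h, v₁, v₂, v₃) = (α√(−A)Ra, ασ, α, α). -/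
/-! Each new variable is a constant multiple of an old one composed with the time change
`t = α T`, so by the chain rule its derivative is `α` times the rescaled Glukhovsky–Dolzhansky
right-hand side. The `Y` and `Z` equations are then ring identities; the `X` equation also needs
`√(-A)² = -A` and `C = -2 A Ra`. -/

theorem HasDerivAt.comp_const_mul {𝕜 E : Type*} [NontriviallyNormedField 𝕜]
    [NormedAddCommGroup E] [NormedSpace 𝕜 E] {f : 𝕜 → E} {f' : E} {c x : 𝕜}
    (hf : HasDerivAt f f' (c * x)) : HasDerivAt (fun x => f (c * x)) (c • f') x := by
  simpa [Function.comp_def] using hf.scomp x ((hasDerivAt_id x).const_mul c)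

theorem gd_to_rabinovich_general
    (A C σ Ra α : ℝ) (hA : A < 0) (hC : C = -2 * A * Ra)
    (x y z : ℝ → ℝ)
    (hx : ∀ t : ℝ, HasDerivAt x (A * y t * z t + C * z t - σ * x t) t)
    (hy : ∀ t : ℝ, HasDerivAt y (-(x t * z t) + Ra - y t) t)
    (hz : ∀ t : ℝ, HasDerivAt z (-z t + x t * y t) t)
    (X Y Z : ℝ → ℝ)
    (hX : ∀ T, X T = α * x (α * T))
    (hY : ∀ T, Y T = α * Real.sqrt (-A) * z (α * T))
    (hZ : ∀ T, Z T = α * Real.sqrt (-A) * (Ra - y (α * T))) :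
    (∀ T : ℝ, HasDerivAt X
      (α * Real.sqrt (-A) * Ra * Y T - α * σ * X T + Y T * Z T) T) ∧
    (∀ T : ℝ, HasDerivAt Y
      (α * Real.sqrt (-A) * Ra * X T - α * Y T - X T * Z T) T) ∧
    (∀ T : ℝ, HasDerivAt Z (-(α * Z T) + X T * Y T) T) := by
  obtain rfl : X = fun T => α * x (α * T) := funext hX
  obtain rfl : Y = fun T => α * Real.sqrt (-A) * z (α * T) := funext hY
  obtain rfl : Z = fun T => α * Real.sqrt (-A) * (Ra - y (α * T)) := funext hZ
  have hsqrt : Real.sqrt (-A) * Real.sqrt (-A) = -A := Real.mul_self_sqrt (by linarith)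
  refine ⟨fun T => ?_, fun T => ?_, fun T => ?_⟩
  · refine ((hx (α * T)).comp_const_mul.const_mul α).congr_deriv ?_
    simp only [smul_eq_mul]
    linear_combination (-(α * α * Ra * z (α * T)) - α * α * z (α * T) * (Ra - y (α * T))) * hsqrt
      + α * α * z (α * T) * hC
  · refine ((hz (α * T)).comp_const_mul.const_mul (α * Real.sqrt (-A))).congr_deriv ?_
    simp only [smul_eq_mul]
    ring
  · refine (((hy (α * T)).comp_const_mul.const_sub Ra).const_mul
      (α * Real.sqrt (-A))).congr_deriv ?_
    simp only [smul_eq_mul]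
    ring

/-- When `C = −2·A·Ra` (with `A < 0`, `α ≠ 0`), the linear rescaling
`X(T) = α·x(αT)`, `Y(T) = α·√(−A)·z(αT)`, `Z(T) = α·√(−A)·(Ra − y(αT))` transforms the
Glukhovsky–Dolzhansky system into the Rabinovich system with parameters
`(h, v₁, v₂, v₃) = (α√(−A)Ra, ασ, α, α)`. -/
theorem gd_to_rabinovich
    (A C σ Ra α : ℝ) (hA : A < 0) (hα : α ≠ 0) (hC : C = -2 * A * Ra)
    (x y z : ℝ → ℝ)
    (hx : ∀ t : ℝ, HasDerivAt x (A * y t * z t + C * z t - σ * x t) t)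
    (hy : ∀ t : ℝ, HasDerivAt y (-(x t * z t) + Ra - y t) t)
    (hz : ∀ t : ℝ, HasDerivAt z (-z t + x t * y t) t)
    (X Y Z : ℝ → ℝ)
    (hX : ∀ T, X T = α * x (α * T))
    (hY : ∀ T, Y T = α * Real.sqrt (-A) * z (α * T))
    (hZ : ∀ T, Z T = α * Real.sqrt (-A) * (Ra - y (α * T))) :
    (∀ T : ℝ, HasDerivAt X
      (α * Real.sqrt (-A) * Ra * Y T - α * σ * X T + Y T * Z T) T) ∧
    (∀ T : ℝ, HasDerivAt Y
      (α * Real.sqrt (-A) * Ra * X T - α * Y T - X T * Z T) T) ∧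
    (∀ T : ℝ, HasDerivAt Z (-(α * Z T) + X T * Y T) T) :=
  gd_to_rabinovich_general A C σ Ra α hA hC x y z hx hy hz X Y Z hX hY hZ
end

section
/- Let A, C, Ra be strictly positive real numbers and σ = 1, and set k = A·Ra + C (so k > 0) and s = √(k·Ra). Suppose (x, y, z) : ℝ → ℝ³ is a differentiable solution of the Glukhovsky–Dolzhansky system ẋ = A y z + C z − x, ẏ = −x z + Ra − y, ż = −z + x y. Define X(T) = (A√Ra / k^{3/2})·x(T/s), Y(T) = (A/k)·z(T/s), Z(T) = (A/k)·(y(T/s) − Ra). Then (X, Y, Z) is a solution of the 3D forced-damped system dX/dT = −(1/s)·X + Y + Y·Z, dY/dT = X − (1/s)·Y + (k/(A·Ra))·X·Z, dZ/dT = −(1/s)·Z − (k/(A·Ra))·X·Y. Hence, when σ = 1, the Glukhovsky–Dolzhansky system is transformed by a linear rescaling into the 3D forced-damped system with parameters (a, b, c) = (1/√((A·Ra+C)·Ra), (A·Ra+C)/(A·Ra), −1/√((A·Ra+C)·Ra)). -/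
/-- When `σ = 1` (with `A, C, Ra > 0`), setting `k = A·Ra + C` and
`s = √(k·Ra)`, the linear rescaling `X(T) = (A√Ra / k^{3/2})·x(T/s)`,
`Y(T) = (A/k)·z(T/s)`, `Z(T) = (A/k)·(y(T/s) − Ra)` transforms the
Glukhovsky–Dolzhansky system into the 3D forced-damped system with parameters
`(a, b, c) = (1/s, k/(A·Ra), −1/s)`. -/
theorem gd_to_forced_damped
    (A C Ra k s : ℝ) (hA : 0 < A) (hC : 0 < C) (hRa : 0 < Ra)
    (hk : k = A * Ra + C) (hs : s = Real.sqrt (k * Ra))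
    (x y z : ℝ → ℝ)
    (hx : ∀ t : ℝ, HasDerivAt x (A * y t * z t + C * z t - x t) t)
    (hy : ∀ t : ℝ, HasDerivAt y (-(x t * z t) + Ra - y t) t)
    (hz : ∀ t : ℝ, HasDerivAt z (-z t + x t * y t) t)
    (X Y Z : ℝ → ℝ)
    (hX : ∀ T, X T = A * Real.sqrt Ra / k ^ ((3 : ℝ) / 2) * x (T / s))
    (hY : ∀ T, Y T = A / k * z (T / s))
    (hZ : ∀ T, Z T = A / k * (y (T / s) - Ra)) :
    (∀ T : ℝ, HasDerivAt X (-(1 / s) * X T + Y T + Y T * Z T) T) ∧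
    (∀ T : ℝ, HasDerivAt Y (X T - 1 / s * Y T + k / (A * Ra) * (X T * Z T)) T) ∧
    (∀ T : ℝ, HasDerivAt Z (-(1 / s) * Z T - k / (A * Ra) * (X T * Y T)) T) := by
  have hk0 : 0 < k := by rw [hk]; positivity
  have hkRa : 0 < k * Ra := mul_pos hk0 hRa
  have hs0 : 0 < s := by rw [hs]; exact Real.sqrt_pos.mpr hkRa
  have hu0 : 0 < Real.sqrt k := Real.sqrt_pos.mpr hk0
  have hv0 : 0 < Real.sqrt Ra := Real.sqrt_pos.mpr hRa
  have hu2 : Real.sqrt k * Real.sqrt k = k := Real.mul_self_sqrt hk0.le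
  have hv2 : Real.sqrt Ra * Real.sqrt Ra = Ra := Real.mul_self_sqrt hRa.le
  have hsuv : s = Real.sqrt k * Real.sqrt Ra := by rw [hs, Real.sqrt_mul hk0.le]
  have hk32 : k ^ ((3 : ℝ) / 2) = k * Real.sqrt k := by
    rw [show ((3 : ℝ) / 2) = 1 + 1 / 2 by norm_num, Real.rpow_add hk0,
      Real.rpow_one, ← Real.sqrt_eq_rpow]
  have hCeq : C = k - A * Ra := by rw [hk]; ring
  set u := Real.sqrt k with hud
  set v := Real.sqrt Ra with hvd
  have hdiv : ∀ T : ℝ, HasDerivAt (fun T : ℝ => T / s) (1 / s) T := by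
    intro T
    simpa using (hasDerivAt_id T).div_const s
  have hXf : X = fun T => A * v / k ^ ((3 : ℝ) / 2) * x (T / s) := funext hX
  have hYf : Y = fun T => A / k * z (T / s) := funext hY
  have hZf : Z = fun T => A / k * (y (T / s) - Ra) := funext hZ
  refine ⟨fun T => ?_, fun T => ?_, fun T => ?_⟩
  · have h1 : HasDerivAt X (A * v / k ^ ((3 : ℝ) / 2) *
        ((A * y (T / s) * z (T / s) + C * z (T / s) - x (T / s)) * (1 / s))) T := by
      rw [hXf]
      exact ((hx (T / s)).comp T (hdiv T)).const_mul _
    convert h1 using 1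
    rw [hX, hY, hZ, hk32, hCeq, hsuv, ← hu2, ← hv2]
    field_simp
    ring
  · have h1 : HasDerivAt Y (A / k *
        ((-z (T / s) + x (T / s) * y (T / s)) * (1 / s))) T := by
      rw [hYf]
      exact ((hz (T / s)).comp T (hdiv T)).const_mul _
    convert h1 using 1
    rw [hX, hY, hZ, hk32, hsuv, ← hu2, ← hv2]
    field_simp
    ring
  · have h1 : HasDerivAt Z (A / k *
        ((-(x (T / s) * z (T / s)) + Ra - y (T / s)) * (1 / s))) T := by
      rw [hZf]
      have h2 := (((hy (T / s)).comp T (hdiv T)).const_mul (A / k)).sub_const (A / k * Ra)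
      simpa [mul_sub] using h2
    convert h1 using 1
    rw [hX, hY, hZ, hk32, hsuv, ← hu2, ← hv2]
    field_simp
    ring
end

section
/- Let A > 0 be a real number and let f ∈ ℝ[x,y,z] be a nonzero homogeneous polynomial of degree n satisfying the first-order PDE A y z ∂f/∂x − x z ∂f/∂y + x y ∂f/∂z = 0. Then n is even, say n = 2m, and there exist real numbers a₀, a₁, …, a_m such that f = Σ_{i=0}^{m} aᵢ (x² + A y²)^{m−i} (y² + z²)^{i}; in particular f belongs to the ℝ-subalgebra of ℝ[x,y,z] generated by x² + A y² and y² + z². -/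
/-!
Comparing the coefficients of `x^(a+1) y^(b+1) z^(c+1)` in the equation gives the recurrence
`A (a+2) f(a+2,b,c) - (b+2) f(a,b+2,c) + (c+2) f(a,b,c+2) = 0`, and the monomials with a zero
exponent give `f(1,b,c) = f(a,1,c) = f(a,b,1) = 0`. Hence the coefficients with an odd exponent
of `y` or `z` vanish, and, as `A ≠ 0`, a solution is determined by its coefficients `f(0,b,c)`.
For a homogeneous solution of degree `n` only `f(0,2s,2t)` with `2s + 2t = n` remain, so `n = 2m`
is even and the solutions of degree `2m` form a space of dimension at most `m + 1`. The `m + 1`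
solutions `(x² + A y²)^(m-i) (y² + z²)^i` are linearly independent, since setting `y = 0` turns
them into the distinct monomials `x^(2(m-i)) z^(2i)`; so they span this space.
-/

open MvPolynomial

namespace GlukhovskyDolzhansky

noncomputable def topDeriv (A : ℝ) :
    Derivation ℝ (MvPolynomial (Fin 3) ℝ) (MvPolynomial (Fin 3) ℝ) :=
  (C A * X 1 * X 2 : MvPolynomial (Fin 3) ℝ) • pderiv 0
    - (X 0 * X 2 : MvPolynomial (Fin 3) ℝ) • pderiv 1
    + (X 0 * X 1 : MvPolynomial (Fin 3) ℝ) • pderiv 2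

theorem topDeriv_apply (A : ℝ) (p : MvPolynomial (Fin 3) ℝ) :
    topDeriv A p = C A * X 1 * X 2 * pderiv 0 p - X 0 * X 2 * pderiv 1 p
      + X 0 * X 1 * pderiv 2 p := by
  simp [topDeriv]

/-- The exponent of the monomial `x ^ a * y ^ b * z ^ c`. -/
noncomputable def exps (a b c : ℕ) : Fin 3 →₀ ℕ := Finsupp.equivFunOnFinite.symm ![a, b, c]

@[simp] theorem exps_apply_zero (a b c : ℕ) : exps a b c 0 = a := rfl
@[simp] theorem exps_apply_one (a b c : ℕ) : exps a b c 1 = b := rfl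
@[simp] theorem exps_apply_two (a b c : ℕ) : exps a b c 2 = c := rfl

theorem exps_eta (d : Fin 3 →₀ ℕ) : exps (d 0) (d 1) (d 2) = d := by
  ext i; fin_cases i <;> rfl

theorem coeff_X_mul_X_mul_pderiv_of_eq {σ R : Type*} [CommSemiring R] {i j k : σ}
    {d e e' : σ →₀ ℕ} (hd : e + Finsupp.single j 1 + Finsupp.single i 1 = d)
    (he : e + Finsupp.single k 1 = e') (p : MvPolynomial σ R) :
    coeff d (X i * X j * pderiv k p) = (e k + 1) * coeff e' p := by
  rw [← hd, ← he, mul_assoc, add_comm _ (Finsupp.single i 1), coeff_X_mul, add_comm e,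
    coeff_X_mul, coeff_pderiv, mul_comm]

theorem coeff_X_mul_X_mul_eq_zero {σ R : Type*} [CommSemiring R] {i j : σ} {d : σ →₀ ℕ}
    (h : d i = 0 ∨ d j = 0) (p : MvPolynomial σ R) : coeff d (X i * X j * p) = 0 := by
  classical
  rcases h with h | h
  · rw [mul_assoc, coeff_X_mul', if_neg (by simpa using h)]
  · rw [mul_comm (X i), mul_assoc, coeff_X_mul', if_neg (by simpa using h)]

section coefficients

variable (A : ℝ) (p : MvPolynomial (Fin 3) ℝ)

theorem coeff_topDeriv (d : Fin 3 →₀ ℕ) :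
    coeff d (topDeriv A p) = A * coeff d (X 1 * X 2 * pderiv 0 p)
      - coeff d (X 0 * X 2 * pderiv 1 p) + coeff d (X 0 * X 1 * pderiv 2 p) := by
  rw [topDeriv_apply, coeff_add, coeff_sub, mul_assoc (C A), mul_assoc (C A),
    coeff_C_mul]

theorem coeff_topDeriv_exps_succ (a b c : ℕ) :
    coeff (exps (a + 1) (b + 1) (c + 1)) (topDeriv A p) =
      A * (a + 2) * coeff (exps (a + 2) b c) p - (b + 2) * coeff (exps a (b + 2) c) p
        + (c + 2) * coeff (exps a b (c + 2)) p := by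
  rw [coeff_topDeriv,
    coeff_X_mul_X_mul_pderiv_of_eq (e := exps (a + 1) b c) (e' := exps (a + 2) b c) ?_ ?_,
    coeff_X_mul_X_mul_pderiv_of_eq (e := exps a (b + 1) c) (e' := exps a (b + 2) c) ?_ ?_,
    coeff_X_mul_X_mul_pderiv_of_eq (e := exps a b (c + 1)) (e' := exps a b (c + 2)) ?_ ?_]
  · simp only [exps_apply_zero, exps_apply_one, exps_apply_two]; push_cast; ring
  all_goals ext i; fin_cases i <;> simp

theorem coeff_topDeriv_exps_zero_left (b c : ℕ) :
    coeff (exps 0 (b + 1) (c + 1)) (topDeriv A p) = A * coeff (exps 1 b c) p := by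
  rw [coeff_topDeriv,
    coeff_X_mul_X_mul_pderiv_of_eq (e := exps 0 b c) (e' := exps 1 b c) ?_ ?_,
    coeff_X_mul_X_mul_eq_zero (.inl rfl), coeff_X_mul_X_mul_eq_zero (.inl rfl)]
  · simp
  all_goals ext i; fin_cases i <;> simp

theorem coeff_topDeriv_exps_zero_mid (a c : ℕ) :
    coeff (exps (a + 1) 0 (c + 1)) (topDeriv A p) = - coeff (exps a 1 c) p := by
  rw [coeff_topDeriv,
    coeff_X_mul_X_mul_eq_zero (i := 1) (.inl rfl), coeff_X_mul_X_mul_eq_zero (j := 1) (.inr rfl),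
    coeff_X_mul_X_mul_pderiv_of_eq (e := exps a 0 c) (e' := exps a 1 c) ?_ ?_]
  · simp
  all_goals ext i; fin_cases i <;> simp

theorem coeff_topDeriv_exps_zero_right (a b : ℕ) :
    coeff (exps (a + 1) (b + 1) 0) (topDeriv A p) = coeff (exps a b 1) p := by
  rw [coeff_topDeriv,
    coeff_X_mul_X_mul_eq_zero (i := 1) (.inr rfl), coeff_X_mul_X_mul_eq_zero (j := 2) (.inr rfl),
    coeff_X_mul_X_mul_pderiv_of_eq (e := exps a b 0) (e' := exps a b 1) ?_ ?_]
  · simp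
  all_goals ext i; fin_cases i <;> simp

end coefficients

section vanishing

variable {A : ℝ} {p : MvPolynomial (Fin 3) ℝ}

theorem coeff_exps_eq_zero_of_odd_mid (hp : topDeriv A p = 0) {b : ℕ} (hb : Odd b) (a c : ℕ) :
    coeff (exps a b c) p = 0 := by
  induction b using Nat.twoStepInduction generalizing a c with
  | zero => exact absurd hb Nat.not_odd_zero
  | one => simpa [hp] using (coeff_topDeriv_exps_zero_mid A p a c).symm
  | more b ih _ =>
    have hb' : Odd b := (Nat.odd_add.mp hb).mpr even_two
    have h := coeff_topDeriv_exps_succ A p a b c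
    rw [hp, coeff_zero, ih hb' (a + 2) c, ih hb' a (c + 2)] at h
    have h' : ((b : ℝ) + 2) * coeff (exps a (b + 2) c) p = 0 := by linarith
    exact (mul_eq_zero.mp h').resolve_left (by positivity)

theorem coeff_exps_eq_zero_of_odd_right (hp : topDeriv A p = 0) {c : ℕ} (hc : Odd c) (a b : ℕ) :
    coeff (exps a b c) p = 0 := by
  induction c using Nat.twoStepInduction generalizing a b with
  | zero => exact absurd hc Nat.not_odd_zero
  | one => simpa [hp] using (coeff_topDeriv_exps_zero_right A p a b).symm
  | more c ih _ =>
    have hc' : Odd c := (Nat.odd_add.mp hc).mpr even_two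
    have h := coeff_topDeriv_exps_succ A p a b c
    rw [hp, coeff_zero, ih hc' (a + 2) b, ih hc' a (b + 2)] at h
    have h' : ((c : ℝ) + 2) * coeff (exps a b (c + 2)) p = 0 := by linarith
    exact (mul_eq_zero.mp h').resolve_left (by positivity)

theorem eq_zero_of_coeff_exps_zero_eq_zero (hA : A ≠ 0) (hp : topDeriv A p = 0)
    (h : ∀ b c, coeff (exps 0 b c) p = 0) : p = 0 := by
  suffices ∀ a b c, coeff (exps a b c) p = 0 by
    ext d
    rw [← exps_eta d]
    exact this _ _ _
  intro a
  induction a using Nat.twoStepInduction with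
  | zero => exact h
  | one =>
    intro b c
    have h1 := coeff_topDeriv_exps_zero_left A p b c
    rw [hp, coeff_zero] at h1
    exact (mul_eq_zero.mp h1.symm).resolve_left hA
  | more a ih _ =>
    intro b c
    have h2 := coeff_topDeriv_exps_succ A p a b c
    rw [hp, coeff_zero, ih (b + 2) c, ih b (c + 2)] at h2
    have h' : (A * ((a : ℝ) + 2)) * coeff (exps (a + 2) b c) p = 0 := by linarith
    exact (mul_eq_zero.mp h').resolve_left (mul_ne_zero hA (by positivity))

theorem eq_zero_of_isHomogeneous_of_coeff_exps_zero_two_mul_eq_zero (hA : A ≠ 0)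
    (hp : topDeriv A p = 0) {n : ℕ} (hhom : p.IsHomogeneous n)
    (h : ∀ s t, 2 * s + 2 * t = n → coeff (exps 0 (2 * s) (2 * t)) p = 0) : p = 0 := by
  refine eq_zero_of_coeff_exps_zero_eq_zero hA hp fun b c => ?_
  rcases Nat.even_or_odd b with ⟨s, rfl⟩ | hb
  · rcases Nat.even_or_odd c with ⟨t, rfl⟩ | hc
    · rw [← two_mul, ← two_mul]
      by_cases hst : 2 * s + 2 * t = n
      · exact h s t hst
      · refine hhom.coeff_eq_zero ?_
        rw [Finsupp.degree_eq_sum, Fin.sum_univ_three]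
        simpa using hst
    · exact coeff_exps_eq_zero_of_odd_right hp hc _ _
  · exact coeff_exps_eq_zero_of_odd_mid hp hb _ _

end vanishing

noncomputable def invariantXY (A : ℝ) : MvPolynomial (Fin 3) ℝ := X 0 ^ 2 + C A * X 1 ^ 2

noncomputable def invariantYZ : MvPolynomial (Fin 3) ℝ := X 1 ^ 2 + X 2 ^ 2

theorem topDeriv_invariantXY (A : ℝ) : topDeriv A (invariantXY A) = 0 := by
  simp [topDeriv_apply, invariantXY, pderiv_X]
  ring

theorem topDeriv_invariantYZ (A : ℝ) : topDeriv A invariantYZ = 0 := by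
  simp [topDeriv_apply, invariantYZ, pderiv_X]
  ring

noncomputable def invariantMonomial (A : ℝ) (m : ℕ) (i : Fin (m + 1)) : MvPolynomial (Fin 3) ℝ :=
  invariantXY A ^ (m - (i : ℕ)) * invariantYZ ^ (i : ℕ)

theorem linearIndependent_invariantMonomial (A : ℝ) (m : ℕ) :
    LinearIndependent ℝ (invariantMonomial A m) := by
  let φ : MvPolynomial (Fin 3) ℝ →ₐ[ℝ] MvPolynomial (Fin 3) ℝ := aeval ![X 0, 0, X 2]
  have hφ : φ.toLinearMap ∘ invariantMonomial A m = fun i : Fin (m + 1) =>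
      monomial (Finsupp.single 0 (2 * (m - i)) + Finsupp.single 2 (2 * (i : ℕ))) (1 : ℝ) := by
    funext i
    rw [Function.comp_apply, ← one_mul (1 : ℝ), ← monomial_mul, ← X_pow_eq_monomial,
      ← X_pow_eq_monomial]
    simp [φ, invariantMonomial, invariantXY, invariantYZ, pow_mul]
  refine LinearIndependent.of_comp φ.toLinearMap ?_
  rw [hφ]
  refine (basisMonomials (Fin 3) ℝ).linearIndependent.comp _ fun i j hij => Fin.ext ?_
  simpa using congrArg (· 2) hij

noncomputable def solutions (A : ℝ) (n : ℕ) : Submodule ℝ (MvPolynomial (Fin 3) ℝ) :=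
  homogeneousSubmodule (Fin 3) ℝ n ⊓ LinearMap.ker (topDeriv A).toLinearMap

theorem mem_solutions {A : ℝ} {n : ℕ} {p : MvPolynomial (Fin 3) ℝ} :
    p ∈ solutions A n ↔ p.IsHomogeneous n ∧ topDeriv A p = 0 := by
  simp [solutions, mem_homogeneousSubmodule]

theorem invariantMonomial_mem_solutions (A : ℝ) (m : ℕ) (i : Fin (m + 1)) :
    invariantMonomial A m i ∈ solutions A (2 * m) := by
  have hXY : (invariantXY A).IsHomogeneous 2 :=
    (isHomogeneous_X_pow 0 2).add ((isHomogeneous_X_pow 1 2).C_mul A)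
  have hYZ : invariantYZ.IsHomogeneous 2 :=
    (isHomogeneous_X_pow 1 2).add (isHomogeneous_X_pow 2 2)
  refine mem_solutions.mpr ⟨?_, ?_⟩
  · have := i.is_le
    rw [show 2 * m = 2 * (m - i) + 2 * i by omega]
    exact (hXY.pow (m - i)).mul (hYZ.pow i)
  · simp [invariantMonomial, Derivation.leibniz, Derivation.leibniz_pow, topDeriv_invariantXY,
      topDeriv_invariantYZ]

noncomputable def evenPlaneCoeffs (m : ℕ) : MvPolynomial (Fin 3) ℝ →ₗ[ℝ] Fin (m + 1) → ℝ :=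
  LinearMap.pi fun t => lcoeff ℝ (exps 0 (2 * (m - t)) (2 * t))

theorem injective_evenPlaneCoeffs_domRestrict {A : ℝ} (hA : A ≠ 0) (m : ℕ) :
    Function.Injective ((evenPlaneCoeffs m).domRestrict (solutions A (2 * m))) := by
  rw [← LinearMap.ker_eq_bot, LinearMap.ker_eq_bot']
  rintro ⟨p, hp⟩ hzero
  obtain ⟨hhom, hD⟩ := mem_solutions.mp hp
  refine Subtype.ext <|
    eq_zero_of_isHomogeneous_of_coeff_exps_zero_two_mul_eq_zero hA hD hhom fun s t hst => ?_
  have := congrFun hzero ⟨t, by omega⟩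
  obtain rfl : s = m - t := by omega
  simpa [evenPlaneCoeffs] using this

theorem span_invariantMonomial_eq_solutions {A : ℝ} (hA : A ≠ 0) (m : ℕ) :
    Submodule.span ℝ (Set.range (invariantMonomial A m)) = solutions A (2 * m) := by
  have hinj := injective_evenPlaneCoeffs_domRestrict hA m
  have : FiniteDimensional ℝ (solutions A (2 * m)) := FiniteDimensional.of_injective _ hinj
  refine Submodule.eq_of_le_of_finrank_le (Submodule.span_le.mpr ?_) ?_
  · rintro _ ⟨i, rfl⟩
    exact invariantMonomial_mem_solutions A m i
  · rw [finrank_span_eq_card (linearIndependent_invariantMonomial A m), Fintype.card_fin]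
    simpa using LinearMap.finrank_le_finrank_of_injective hinj

end GlukhovskyDolzhansky

open GlukhovskyDolzhansky in
/-- For `A > 0`, every nonzero homogeneous polynomial solution `f` of
degree `n` of the PDE `A y z ∂f/∂x − x z ∂f/∂y + x y ∂f/∂z = 0` has even degree
`n = 2m` and is of the form `f = Σ_{i=0}^{m} aᵢ (x² + A y²)^{m−i} (y² + z²)^{i}`. -/
theorem gd_top_degree_pde_solutions
    (A : ℝ) (hA : 0 < A) (n : ℕ) (f : MvPolynomial (Fin 3) ℝ) (hf : f ≠ 0)
    (hhom : f.IsHomogeneous n)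
    (hpde : MvPolynomial.C A * X 1 * X 2 * pderiv (0 : Fin 3) f
        - X 0 * X 2 * pderiv (1 : Fin 3) f
        + X 0 * X 1 * pderiv (2 : Fin 3) f = 0) :
    ∃ m : ℕ, n = 2 * m ∧ ∃ a : Fin (m + 1) → ℝ,
      f = ∑ i : Fin (m + 1),
        MvPolynomial.C (a i) * (X 0 ^ 2 + MvPolynomial.C A * X 1 ^ 2) ^ (m - (i : ℕ)) *
          (X 1 ^ 2 + X 2 ^ 2) ^ (i : ℕ) := by
  have hD : topDeriv A f = 0 := by rwa [topDeriv_apply]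
  obtain ⟨m, rfl | rfl⟩ := Nat.even_or_odd' n
  · have hf_mem : f ∈ Submodule.span ℝ (Set.range (invariantMonomial A m)) := by
      rw [span_invariantMonomial_eq_solutions hA.ne', mem_solutions]
      exact ⟨hhom, hD⟩
    obtain ⟨a, rfl⟩ := (Submodule.mem_span_range_iff_exists_fun ℝ).mp hf_mem
    refine ⟨m, rfl, a, Finset.sum_congr rfl fun i _ => ?_⟩
    rw [smul_eq_C_mul, invariantMonomial, invariantXY, invariantYZ, mul_assoc]
  · refine absurd ?_ hf
    exact eq_zero_of_isHomogeneous_of_coeff_exps_zero_two_mul_eq_zero hA.ne' hD hhom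
      fun s t h => by omega
end

section
/- Let A, C, σ, Ra be strictly positive real parameters. If g ∈ ℝ[x,y,z] is a polynomial such that X(g) has degree at most 1, then g has degree at most 2. -/
/-!
Let `d ≥ 1` be the degree of `g` and `g_d`, `g_{d-1}` its two top homogeneous parts. Since `X(g)`
has degree at most `1`, its components of degree `d + 1` and `d` vanish: `g_d` is annihilated by the
quadratic part `X₂ = A y z ∂ₓ − x z ∂_y + x y ∂_z` of `X`, and `X₂ g_{d-1}` cancels the linear part
of `X` applied to `g_d`. On coefficients, the first condition (with `A ≠ 0`) kills every monomial
of `g_d` with an odd exponent, by induction on that exponent. For even `d`, descend on the exponent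
`2i` of `x`: once the slices above it vanish, the coefficients of `g_d` with `x`-exponent `2i` are
proportional to binomial coefficients, while the second condition ties them to a chain of
coefficients of `g_{d-1}` whose two ends are zero; for `σ > 0` the signs along this chain are
incompatible unless the slice is zero. So `g` is in fact constant.
-/

open MvPolynomial

namespace MvPolynomial

variable {σ R : Type*} [CommRing R]

open scoped Classical in
/-- The coefficient of `X^e`, set to `0` when `e` has a negative entry, so that the shift rules
`coeffZ_X_mul` and `coeffZ_pderiv` hold without side conditions. -/
noncomputable def coeffZ [Finite σ] (e : σ → ℤ) : MvPolynomial σ R →ₗ[R] R :=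
  if 0 ≤ e then lcoeff R (Finsupp.equivFunOnFinite.symm fun i => (e i).toNat) else 0

theorem coeffZ_of_nonneg [Finite σ] {e : σ → ℤ} (he : 0 ≤ e) (p : MvPolynomial σ R) :
    coeffZ e p = coeff (Finsupp.equivFunOnFinite.symm fun i => (e i).toNat) p := by
  simp [coeffZ, he]

theorem coeffZ_of_not_nonneg [Finite σ] {e : σ → ℤ} (he : ¬ 0 ≤ e) (p : MvPolynomial σ R) :
    coeffZ e p = 0 := by
  simp [coeffZ, he]

theorem coeffZ_X_mul [Finite σ] [DecidableEq σ] (e : σ → ℤ) (i : σ) (p : MvPolynomial σ R) :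
    coeffZ e (X i * p) = coeffZ (e - Pi.single i 1) p := by
  by_cases he : 0 ≤ e
  · by_cases hi : 1 ≤ e i
    · have he' : 0 ≤ e - Pi.single i 1 := fun j => by
        have := he j
        rcases eq_or_ne j i with rfl | hj <;> simp_all
      rw [coeffZ_of_nonneg he, coeffZ_of_nonneg he', coeff_X_mul', if_pos (by simp; omega)]
      congr 1
      ext j
      rcases eq_or_ne j i with rfl | hj
      · simp
      · simp [hj]
    · have he' : ¬ 0 ≤ e - Pi.single i 1 := fun h => by have := h i; simp at this; omega
      rw [coeffZ_of_nonneg he, coeffZ_of_not_nonneg he', coeff_X_mul', if_neg (by simp; omega)]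
  · have he' : ¬ 0 ≤ e - Pi.single i 1 := fun h => he fun j => by
      have := h j
      rcases eq_or_ne j i with rfl | hj <;> simp_all
      omega
    rw [coeffZ_of_not_nonneg he, coeffZ_of_not_nonneg he']

theorem coeffZ_pderiv [Finite σ] [DecidableEq σ] (e : σ → ℤ) (i : σ) (p : MvPolynomial σ R) :
    coeffZ e (pderiv i p) = (e i + 1 : ℤ) * coeffZ (e + Pi.single i 1) p := by
  by_cases he : 0 ≤ e
  · have he' : 0 ≤ e + Pi.single i 1 := fun j => by
      have := he j
      rcases eq_or_ne j i with rfl | hj <;> simp_all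
      omega
    rw [coeffZ_of_nonneg he, coeffZ_of_nonneg he', coeff_pderiv, mul_comm]
    congr 1
    · have hi : 0 ≤ e i := he i
      simp only [Finsupp.equivFunOnFinite_symm_apply_apply, Int.cast_add, Int.cast_one]
      rw [← Int.cast_natCast, Int.toNat_of_nonneg hi]
    · congr 1
      ext j
      have hj0 : 0 ≤ e j := he j
      rcases eq_or_ne j i with rfl | hj
      · simp
        omega
      · simp [hj]
  · by_cases hi : e i = -1
    · rw [coeffZ_of_not_nonneg he, hi]; simp
    · have he' : ¬ 0 ≤ e + Pi.single i 1 := fun h => he fun j => by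
        have := h j
        rcases eq_or_ne j i with rfl | hj <;> simp_all
        omega
      rw [coeffZ_of_not_nonneg he, coeffZ_of_not_nonneg he', mul_zero]

theorem coeffZ_eq_zero_of_totalDegree_lt [Fintype σ] {e : σ → ℤ} {p : MvPolynomial σ R}
    (h : (p.totalDegree : ℤ) < ∑ i, e i) : coeffZ e p = 0 := by
  by_cases he : 0 ≤ e
  · rw [coeffZ_of_nonneg he]
    apply coeff_eq_zero_of_totalDegree_lt
    rw [← Finsupp.degree_apply, Finsupp.degree_eq_sum]
    have : ∑ i, e i = ∑ i, ((e i).toNat : ℤ) :=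
      Finset.sum_congr rfl fun i _ => (Int.toNat_of_nonneg (he i)).symm
    simp only [Finsupp.equivFunOnFinite_symm_apply_apply]
    zify
    omega
  · exact coeffZ_of_not_nonneg he p

theorem exists_coeffZ_ne_zero [Fintype σ] {p : MvPolynomial σ R} (hp : p ≠ 0) :
    ∃ e : σ → ℤ, ∑ i, e i = p.totalDegree ∧ coeffZ e p ≠ 0 := by
  obtain ⟨m, hm, hdeg⟩ := Finset.exists_mem_eq_sup p.support (support_nonempty.mpr hp)
    fun m => m.sum fun _ k => k
  have he : 0 ≤ fun i => (m i : ℤ) := fun i => Int.natCast_nonneg (m i)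
  refine ⟨fun i => m i, ?_, ?_⟩
  · rw [totalDegree, hdeg]
    change _ = ((Finsupp.degree m : ℕ) : ℤ)
    rw [Finsupp.degree_eq_sum]
    push_cast
    rfl
  · simpa [coeffZ_of_nonneg he] using hm


noncomputable def coeff3 (a b c : ℤ) : MvPolynomial (Fin 3) R →ₗ[R] R := coeffZ ![a, b, c]

variable {a b c : ℤ} (p : MvPolynomial (Fin 3) R)

theorem coeff3_of_neg (h : a < 0 ∨ b < 0 ∨ c < 0) : coeff3 a b c p = 0 := by
  refine coeffZ_of_not_nonneg (fun he => ?_) p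
  have := he 0; have := he 1; have := he 2
  simp at *
  omega

theorem coeff3_C_mul (r : R) : coeff3 a b c (C r * p) = r * coeff3 a b c p := by
  rw [C_mul', map_smul, smul_eq_mul]

theorem coeff3_X0_mul : coeff3 a b c (X 0 * p) = coeff3 (a - 1) b c p := by
  rw [coeff3, coeffZ_X_mul]; congr 2; ext i; fin_cases i <;> simp

theorem coeff3_X1_mul : coeff3 a b c (X 1 * p) = coeff3 a (b - 1) c p := by
  rw [coeff3, coeffZ_X_mul]; congr 2; ext i; fin_cases i <;> simp

theorem coeff3_X2_mul : coeff3 a b c (X 2 * p) = coeff3 a b (c - 1) p := by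
  rw [coeff3, coeffZ_X_mul]; congr 2; ext i; fin_cases i <;> simp

theorem coeff3_pderiv0 : coeff3 a b c (pderiv 0 p) = (a + 1 : ℤ) * coeff3 (a + 1) b c p := by
  rw [coeff3, coeffZ_pderiv]; congr 3; ext i; fin_cases i <;> simp

theorem coeff3_pderiv1 : coeff3 a b c (pderiv 1 p) = (b + 1 : ℤ) * coeff3 a (b + 1) c p := by
  rw [coeff3, coeffZ_pderiv]; congr 3; ext i; fin_cases i <;> simp

theorem coeff3_pderiv2 : coeff3 a b c (pderiv 2 p) = (c + 1 : ℤ) * coeff3 a b (c + 1) p := by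
  rw [coeff3, coeffZ_pderiv]; congr 3; ext i; fin_cases i <;> simp

theorem coeff3_eq_zero_of_totalDegree_lt (h : (p.totalDegree : ℤ) < a + b + c) :
    coeff3 a b c p = 0 :=
  coeffZ_eq_zero_of_totalDegree_lt (by simpa [Fin.sum_univ_three, add_assoc] using h)

theorem exists_coeff3_ne_zero (hp : p ≠ 0) :
    ∃ a b c : ℤ, a + b + c = p.totalDegree ∧ coeff3 a b c p ≠ 0 := by
  obtain ⟨e, he, hne⟩ := exists_coeffZ_ne_zero hp
  refine ⟨e 0, e 1, e 2, by simpa [Fin.sum_univ_three] using he, ?_⟩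
  have hvec : ![e 0, e 1, e 2] = e := by ext i; fin_cases i <;> rfl
  rwa [coeff3, hvec]

end MvPolynomial

theorem eq_zero_of_odd_of_descent {M : Type*} [Zero M] {f : ℤ → ℤ → ℤ → M} {d : ℤ}
    (hneg : ∀ k < 0, ∀ u v, f k u v = 0)
    (hstep : ∀ k u v, 1 ≤ k → k + u + v = d →
      f (k - 2) (u + 2) v = 0 → f (k - 2) u (v + 2) = 0 → f k u v = 0)
    {k u v : ℤ} (hk : Odd k) (h : k + u + v = d) : f k u v = 0 := by
  obtain ⟨t, rfl⟩ := hk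
  rcases lt_or_ge t 0 with ht | ht
  · exact hneg _ (by omega) u v
  induction t, ht using Int.leInduction generalizing u v with
  | base => exact hstep 1 u v le_rfl h (hneg _ (by omega) _ _) (hneg _ (by omega) _ _)
  | succ t ht ih =>
    have hk : 2 * (t + 1) + 1 - 2 = 2 * t + 1 := by ring
    exact hstep _ u v (by omega) h (hk ▸ ih (by omega)) (hk ▸ ih (by omega))

section BinomialChain

variable {n : ℤ} {γ : ℤ → ℝ}
  (hγ : ∀ j, 0 ≤ j → j < n → ((j : ℝ) + 1) * γ (j + 1) = ((n : ℝ) - j) * γ j)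
include hγ

theorem mul_pos_of_binomial_recurrence (h₀ : γ 0 ≠ 0) :
    ∀ j, 0 ≤ j → j ≤ n → 0 < γ j * γ 0 := by
  intro j hj
  induction j, hj using Int.leInduction with
  | base => exact fun _ => mul_self_pos.mpr h₀
  | succ j hj ih =>
    intro hjn
    have hrec : ((j : ℝ) + 1) * (γ (j + 1) * γ 0) = ((n : ℝ) - j) * (γ j * γ 0) := by
      rw [← mul_assoc, hγ j hj (by omega), mul_assoc]
    have hj' : (0 : ℝ) ≤ j := by exact_mod_cast hj
    have hnj : (j : ℝ) < n := by exact_mod_cast (show j < n by omega)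
    exact pos_of_mul_pos_right (hrec ▸ mul_pos (by linarith) (ih (by omega))) (by linarith)

theorem eq_zero_of_binomial_recurrence (h₀ : γ 0 = 0) : ∀ j, 0 ≤ j → j ≤ n → γ j = 0 := by
  intro j hj
  induction j, hj using Int.leInduction with
  | base => exact fun _ => h₀
  | succ j hj ih =>
    intro hjn
    have h := hγ j hj (by omega)
    rw [ih (by omega), mul_zero] at h
    have hj' : (0 : ℝ) ≤ j := by exact_mod_cast hj
    exact (mul_eq_zero.mp h).resolve_left (by linarith)

variable {s : ℝ} {κ : ℤ → ℝ} (hs : 0 < s) (hκ₀ : κ (-1) = 0) (hκn : κ n = 0)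
  (hκ : ∀ j, 0 ≤ j → j ≤ n →
    (2 * ((n : ℝ) - j) + 1) * κ (j - 1) - (2 * (j : ℝ) + 1) * κ j = s * γ j)
include hs hκ₀ hκn hκ

/-- If `γ 0 ≠ 0`, every `γ j` has the sign of `γ 0`, so the chain forces each `κ j` to have the
opposite sign, which the last equation `κ (n - 1) = s * γ n` contradicts. -/
theorem binomial_chain_start_eq_zero (hn : 0 ≤ n) : γ 0 = 0 := by
  by_contra h₀
  have hpos := mul_pos_of_binomial_recurrence hγ h₀
  have hneg : ∀ j, -1 ≤ j → j < n → κ j * γ 0 ≤ 0 := by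
    intro j hj
    induction j, hj using Int.leInduction with
    | base => exact fun _ => by rw [hκ₀, zero_mul]
    | succ j hj ih =>
      intro hjn
      have hrec := hκ (j + 1) (by omega) (by omega)
      push_cast at hrec
      rw [add_sub_cancel_right] at hrec
      have hj' : (-1 : ℝ) ≤ j := by exact_mod_cast hj
      have hnj : (j : ℝ) + 1 < n := by exact_mod_cast (show j + 1 < n by omega)
      have hP := mul_nonpos_of_nonneg_of_nonpos (show 0 ≤ 2 * ((n : ℝ) - j) - 1 by linarith)
        (ih (by omega))
      have hR := mul_pos hs (hpos (j + 1) (by omega) (by omega))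
      refine nonpos_of_mul_nonpos_right (a := 2 * (j : ℝ) + 3) ?_ (by linarith)
      linear_combination (-γ 0) * hrec + hP + hR
  have hlast := hκ n hn le_rfl
  rw [hκn, mul_zero, sub_zero, sub_self, mul_zero, zero_add, one_mul] at hlast
  have := hneg (n - 1) (by omega) (by omega)
  rw [hlast, mul_assoc] at this
  linarith [mul_pos hs (hpos n hn le_rfl)]

theorem binomial_chain_eq_zero (hn : 0 ≤ n) : ∀ j, 0 ≤ j → j ≤ n → γ j = 0 ∧ κ j = 0 := by
  have hγ_eq := eq_zero_of_binomial_recurrence hγ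
    (binomial_chain_start_eq_zero hγ hs hκ₀ hκn hκ hn)
  have hκ_eq : ∀ j, -1 ≤ j → j < n → κ j = 0 := by
    intro j hj
    induction j, hj using Int.leInduction with
    | base => exact fun _ => hκ₀
    | succ j hj ih =>
      intro hjn
      have h := hκ (j + 1) (by omega) (by omega)
      rw [add_sub_cancel_right, ih (by omega), hγ_eq (j + 1) (by omega) (by omega)] at h
      have hj' : (-1 : ℝ) ≤ j := by exact_mod_cast hj
      push_cast at h
      have h' : (2 * (j : ℝ) + 3) * κ (j + 1) = 0 := by linarith
      exact (mul_eq_zero.mp h').resolve_left (by linarith)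
  intro j hj hjn
  refine ⟨hγ_eq j hj hjn, ?_⟩
  rcases hjn.lt_or_eq with hjn | rfl
  exacts [hκ_eq j (by omega) hjn, hκn]

end BinomialChain

namespace GlukhovskyDolzhansky

variable {A C σ Ra : ℝ} {g : MvPolynomial (Fin 3) ℝ}

theorem coeff3_gdDeriv (a b c : ℤ) :
    coeff3 a b c (gdDeriv A C σ Ra g) =
      A * (a + 1 : ℤ) * coeff3 (a + 1) (b - 1) (c - 1) g
        + C * (a + 1 : ℤ) * coeff3 (a + 1) b (c - 1) g
        - (σ * a + b + c) * coeff3 a b c g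
        - (b + 1 : ℤ) * coeff3 (a - 1) (b + 1) (c - 1) g
        + Ra * (b + 1 : ℤ) * coeff3 a (b + 1) c g
        + (c + 1 : ℤ) * coeff3 (a - 1) (b - 1) (c + 1) g := by
  simp only [gdDeriv, add_mul, sub_mul, neg_mul, mul_assoc, map_add, map_sub, map_neg,
    coeff3_C_mul, coeff3_X0_mul, coeff3_X1_mul, coeff3_X2_mul,
    coeff3_pderiv0, coeff3_pderiv1, coeff3_pderiv2, sub_add_cancel]
  push_cast
  ring

variable (hdeg : (gdDeriv A C σ Ra g).totalDegree ≤ 1)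
include hdeg

theorem relation_of_totalDegree_lt {a b c : ℤ} (h2 : 2 ≤ a + b + c)
    (hd : (g.totalDegree : ℤ) < a + b + c) :
    A * (a + 1 : ℤ) * coeff3 (a + 1) (b - 1) (c - 1) g
      - (b + 1 : ℤ) * coeff3 (a - 1) (b + 1) (c - 1) g
      + (c + 1 : ℤ) * coeff3 (a - 1) (b - 1) (c + 1) g = 0 := by
  have h := coeff3_eq_zero_of_totalDegree_lt (a := a) (b := b) (c := c) (gdDeriv A C σ Ra g)
    (by omega)
  rw [coeff3_gdDeriv, coeff3_eq_zero_of_totalDegree_lt g (by omega : _ < a + 1 + b + (c - 1)),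
    coeff3_eq_zero_of_totalDegree_lt g hd,
    coeff3_eq_zero_of_totalDegree_lt g (by omega : _ < a + (b + 1) + c)] at h
  linear_combination h

theorem relation_of_totalDegree_le {a b c : ℤ} (h2 : 2 ≤ a + b + c)
    (hd : (g.totalDegree : ℤ) ≤ a + b + c) :
    A * (a + 1 : ℤ) * coeff3 (a + 1) (b - 1) (c - 1) g
      + C * (a + 1 : ℤ) * coeff3 (a + 1) b (c - 1) g
      - (σ * a + b + c) * coeff3 a b c g
      - (b + 1 : ℤ) * coeff3 (a - 1) (b + 1) (c - 1) g
      + (c + 1 : ℤ) * coeff3 (a - 1) (b - 1) (c + 1) g = 0 := by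
  have h := coeff3_eq_zero_of_totalDegree_lt (a := a) (b := b) (c := c) (gdDeriv A C σ Ra g)
    (by omega)
  rw [coeff3_gdDeriv, coeff3_eq_zero_of_totalDegree_lt g (by omega : _ < a + (b + 1) + c)] at h
  linear_combination h

theorem coeff3_eq_zero_of_odd (hA : A ≠ 0) (hd : 1 ≤ g.totalDegree) {a b c : ℤ}
    (h : a + b + c = g.totalDegree) (hodd : Odd a ∨ Odd b ∨ Odd c) : coeff3 a b c g = 0 := by
  have hcast : ∀ k : ℤ, 1 ≤ k → (k : ℝ) ≠ 0 := fun k hk => Int.cast_ne_zero.mpr (by omega)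
  rcases hodd with ha | hb | hc
  · refine eq_zero_of_odd_of_descent (d := g.totalDegree) (f := fun a b c => coeff3 a b c g)
      (fun k hk u v => coeff3_of_neg g (by omega)) (fun k u v hk hs hu hv => ?_) ha h
    have key := relation_of_totalDegree_lt hdeg (a := k - 1) (b := u + 1) (c := v + 1)
      (by omega) (by omega)
    have : A * k * coeff3 k u v g = 0 := by
      push_cast at key
      linear_combination (norm := ring_nf) key + (u + 2 : ℝ) * hu - (v + 2 : ℝ) * hv
    exact (mul_eq_zero.mp this).resolve_left (mul_ne_zero hA (hcast k hk))
  · refine eq_zero_of_odd_of_descent (d := g.totalDegree) (f := fun b a c => coeff3 a b c g)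
      (fun k hk u v => coeff3_of_neg g (by omega)) (fun k u v hk hs hu hv => ?_) hb (by omega)
    have key := relation_of_totalDegree_lt hdeg (a := u + 1) (b := k - 1) (c := v + 1)
      (by omega) (by omega)
    have : k * coeff3 u k v g = 0 := by
      push_cast at key
      linear_combination (norm := ring_nf) -key + A * (u + 2 : ℝ) * hu + (v + 2 : ℝ) * hv
    exact (mul_eq_zero.mp this).resolve_left (hcast k hk)
  · refine eq_zero_of_odd_of_descent (d := g.totalDegree) (f := fun c a b => coeff3 a b c g)
      (fun k hk u v => coeff3_of_neg g (by omega)) (fun k u v hk hs hu hv => ?_) hc (by omega)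
    have key := relation_of_totalDegree_lt hdeg (a := u + 1) (b := v + 1) (c := k - 1)
      (by omega) (by omega)
    have : k * coeff3 u v k g = 0 := by
      push_cast at key
      linear_combination (norm := ring_nf) key - A * (u + 2 : ℝ) * hu + (v + 2 : ℝ) * hv
    exact (mul_eq_zero.mp this).resolve_left (hcast k hk)

theorem level_step (hA : A ≠ 0) (hσ : 0 < σ) {m i : ℤ} (hdm : (g.totalDegree : ℤ) = 2 * m)
    (hm : 1 ≤ m) (hi : 0 ≤ i) (him : i ≤ m)
    (hG : ∀ j l, i + 1 + j + l = m → coeff3 (2 * (i + 1)) (2 * j) (2 * l) g = 0)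
    (hK : ∀ q r, i + q + r = m - 2 → coeff3 (2 * i + 1) (2 * q + 1) (2 * r + 1) g = 0) :
    (∀ j l, i + j + l = m → coeff3 (2 * i) (2 * j) (2 * l) g = 0) ∧
      ∀ q r, i - 1 + q + r = m - 2 → coeff3 (2 * (i - 1) + 1) (2 * q + 1) (2 * r + 1) g = 0 := by
  have hs : 0 < 2 * (σ * i + ((m - i : ℤ) : ℝ)) := by
    have hi' : (0 : ℝ) ≤ i := by exact_mod_cast hi
    rcases hi.eq_or_lt with rfl | hi0
    · simpa using (show (0 : ℝ) < m by exact_mod_cast hm)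
    · have : (0 : ℝ) ≤ ((m - i : ℤ) : ℝ) := by exact_mod_cast (show 0 ≤ m - i by omega)
      have : (0 : ℝ) < σ * i := mul_pos hσ (by exact_mod_cast hi0)
      linarith
  -- `γ` is the slice of `g_d` with `x`-exponent `2i` and `κ` that of `g_{d-1}` with `x`-exponent
  -- `2i - 1`; the `C`-term of the degree-`d` relation has odd `x`-exponent, so it vanishes.
  have hchain := binomial_chain_eq_zero (n := m - i)
    (γ := fun j => coeff3 (2 * i) (2 * j) (2 * (m - i - j)) g)
    (κ := fun j => coeff3 (2 * (i - 1) + 1) (2 * j + 1) (2 * (m - i - 1 - j) + 1) g)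
    ?_ hs (coeff3_of_neg g (by omega)) (coeff3_of_neg g (by omega)) ?_ (by omega)
  · refine ⟨fun j l h => ?_, fun q r h => ?_⟩
    · rcases lt_or_ge j 0 with hj | hj
      · exact coeff3_of_neg g (by omega)
      rcases lt_or_ge l 0 with hl | hl
      · exact coeff3_of_neg g (by omega)
      obtain rfl : l = m - i - j := by omega
      exact (hchain j hj (by omega)).1
    · rcases lt_or_ge q 0 with hq | hq
      · exact coeff3_of_neg g (by omega)
      rcases lt_or_ge r 0 with hr | hr
      · exact coeff3_of_neg g (by omega)
      obtain rfl : r = m - i - 1 - q := by omega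
      exact (hchain q hq (by omega)).2
  · intro j _ _
    have key := relation_of_totalDegree_lt hdeg (a := 2 * i + 1) (b := 2 * j + 1)
      (c := 2 * (m - i - j) - 1) (by omega) (by omega)
    have hzero := hG j (m - i - j - 1) (by omega)
    push_cast at key ⊢
    linear_combination (norm := ring_nf) (-1 / 2 : ℝ) * key + A * (i + 1 : ℝ) * hzero
  · intro j _ _
    have key := relation_of_totalDegree_le hdeg (a := 2 * i) (b := 2 * j)
      (c := 2 * (m - i - j)) (by omega) (by omega)
    have hK' := hK (j - 1) (m - i - j - 1) (by omega)
    have hC := coeff3_eq_zero_of_odd hdeg hA (by omega) (a := 2 * i + 1) (b := 2 * j)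
      (c := 2 * (m - i - j) - 1) (by omega) (Or.inl ⟨i, rfl⟩)
    push_cast at key ⊢
    linear_combination (norm := ring_nf)
      key - A * (2 * i + 1 : ℝ) * hK' - C * (2 * i + 1 : ℝ) * hC

theorem coeff3_even_eq_zero (hA : A ≠ 0) (hσ : 0 < σ) {m : ℤ}
    (hdm : (g.totalDegree : ℤ) = 2 * m) (hm : 1 ≤ m) {i j l : ℤ} (h : i + j + l = m) :
    coeff3 (2 * i) (2 * j) (2 * l) g = 0 := by
  have descent : ∀ i ≤ m,
      (∀ j l, i + 1 + j + l = m → coeff3 (2 * (i + 1)) (2 * j) (2 * l) g = 0) ∧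
        ∀ q r, i + q + r = m - 2 → coeff3 (2 * i + 1) (2 * q + 1) (2 * r + 1) g = 0 := by
    intro i hi
    induction i, hi using Int.leInductionDown with
    | base =>
      exact ⟨fun j l h => coeff3_of_neg g (by omega), fun q r h => coeff3_of_neg g (by omega)⟩
    | pred i hi ih =>
      rcases lt_or_ge i 0 with hi0 | hi0
      · exact ⟨fun j l h => coeff3_of_neg g (by omega), fun q r h => coeff3_of_neg g (by omega)⟩
      obtain ⟨hG, hK⟩ := level_step hdeg hA hσ hdm hm hi0 hi ih.1 ih.2
      exact ⟨fun j l h => by rw [sub_add_cancel] at h ⊢; exact hG j l h, hK⟩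
  rcases le_or_gt i m with him | him
  · simpa using (descent (i - 1) (by omega)).1 j l (by omega)
  · exact coeff3_of_neg g (by omega)

theorem coeff3_eq_zero_of_eq_totalDegree (hA : A ≠ 0) (hσ : 0 < σ) (hd : 1 ≤ g.totalDegree)
    {a b c : ℤ} (h : a + b + c = g.totalDegree) : coeff3 a b c g = 0 := by
  rcases Int.even_or_odd a with ⟨i, rfl⟩ | ha
  · rcases Int.even_or_odd b with ⟨j, rfl⟩ | hb
    · rcases Int.even_or_odd c with ⟨l, rfl⟩ | hc
      · simp only [← two_mul] at h ⊢
        exact coeff3_even_eq_zero hdeg hA hσ (m := i + j + l) (by omega) (by omega) rfl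
      · exact coeff3_eq_zero_of_odd hdeg hA hd h (by tauto)
    · exact coeff3_eq_zero_of_odd hdeg hA hd h (by tauto)
  · exact coeff3_eq_zero_of_odd hdeg hA hd h (by tauto)

theorem totalDegree_eq_zero (hA : A ≠ 0) (hσ : 0 < σ) : g.totalDegree = 0 := by
  by_contra hd
  have hg : g ≠ 0 := by rintro rfl; simp at hd
  obtain ⟨a, b, c, h, hne⟩ := exists_coeff3_ne_zero g hg
  exact hne (coeff3_eq_zero_of_eq_totalDegree hdeg hA hσ (by omega) h)

end GlukhovskyDolzhansky

theorem gd_exponential_factor_degree_bound_general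
    (A C σ Ra : ℝ) (hA : 0 < A) (hσ : 0 < σ)
    (g : MvPolynomial (Fin 3) ℝ)
    (hdeg : (gdDeriv A C σ Ra g).totalDegree ≤ 1) :
    g.totalDegree ≤ 2 := by
  rw [GlukhovskyDolzhansky.totalDegree_eq_zero hdeg hA.ne' hσ]
  norm_num

/-- For positive parameters, if `X(g)` has degree at most 1, then `g`
has degree at most 2. -/
theorem gd_exponential_factor_degree_bound
    (A C σ Ra : ℝ) (hA : 0 < A) (hC : 0 < C) (hσ : 0 < σ) (hRa : 0 < Ra)
    (g : MvPolynomial (Fin 3) ℝ)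
    (hdeg : (gdDeriv A C σ Ra g).totalDegree ≤ 1) :
    g.totalDegree ≤ 2 :=
  gd_exponential_factor_degree_bound_general A C σ Ra hA hσ g hdeg
end
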